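/- (Monotonicity in the heat flux coefficient.) Assume α₂ > α₃. For q > q₂, let λ₁(q) > z₀ be the unique solution of the reduced Neumann system with data q, and let λ₂(q) ≥ 0 satisfy erf(λ₂(q)·√(α₁/α₂)) = H(λ₁(q)). Then for all q₂ < q < q': (i) λ₁(q) < λ₁(q'); (ii) λ₂(q) < λ₂(q'); and (iii) A(q) < A(q'), where A(q) := B + (q·√(π·α₃)/k₃)·erf(λ₂(q)·√(α₁/α₃)). -/

import Mathlib

noncomputable section

/-- The error function `erf x = (2/√π) ∫₀ˣ exp(−s²) ds`. -/
def erf (x : ℝ) : ℝ := (2 / Real.sqrt Real.pi) * ∫ s in (0:ℝ)..x, Real.exp (-(s^2))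

/-- The complementary error function. -/
def erfc (x : ℝ) : ℝ := 1 - erf x

/-- Physical data of the three-phase Stefan problem: positive thermal conductivities,
specific heats, mass density, latent heats, and temperatures `B > C > D`. -/
structure Params where
  k₁ : ℝ
  k₂ : ℝ
  k₃ : ℝ
  c₁ : ℝ
  c₂ : ℝ
  c₃ : ℝ
  ρ : ℝ
  ℓ₁ : ℝ
  ℓ₂ : ℝ
  B : ℝ
  C : ℝ
  D : ℝ
  hk₁ : 0 < k₁
  hk₂ : 0 < k₂
  hk₃ : 0 < k₃
  hc₁ : 0 < c₁
  hc₂ : 0 < c₂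
  hc₃ : 0 < c₃
  hρ : 0 < ρ
  hℓ₁ : 0 < ℓ₁
  hℓ₂ : 0 < ℓ₂
  hBC : C < B
  hCD : D < C

namespace Params

/-- Thermal diffusivity of phase 1. -/
def α₁ (p : Params) : ℝ := p.k₁ / (p.ρ * p.c₁)

/-- Thermal diffusivity of phase 2. -/
def α₂ (p : Params) : ℝ := p.k₂ / (p.ρ * p.c₂)

/-- Thermal diffusivity of phase 3. -/
def α₃ (p : Params) : ℝ := p.k₃ / (p.ρ * p.c₃)

/-- Stefan number `Ste₁ = c₁(C−D)/ℓ₁`. -/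
def Ste₁ (p : Params) : ℝ := p.c₁ * (p.C - p.D) / p.ℓ₁

/-- Stefan number `Ste₂ = c₂(B−C)/ℓ₂`. -/
def Ste₂ (p : Params) : ℝ := p.c₂ * (p.B - p.C) / p.ℓ₂

/-- `φ(z) = z + (Ste₁/√π) exp(−z²)/erfc(z)`. -/
def φ (p : Params) (z : ℝ) : ℝ :=
  z + (p.Ste₁ / Real.sqrt Real.pi) * Real.exp (-(z^2)) / erfc z

/-- `H(z) = erf(z√(α₁/α₂)) − (Ste₂/√π)(ℓ₂/ℓ₁)√(k₂c₁/(k₁c₂)) exp(−z²α₁/α₂)/φ(z)`. -/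
def H (p : Params) (z : ℝ) : ℝ :=
  erf (z * Real.sqrt (p.α₁ / p.α₂)) -
    (p.Ste₂ / Real.sqrt Real.pi) * (p.ℓ₂ / p.ℓ₁) *
      Real.sqrt (p.k₂ * p.c₁ / (p.k₁ * p.c₂)) *
      (Real.exp (-(z^2) * (p.α₁ / p.α₂)) / p.φ z)

/-- `Q(z) = (ℓ₁/ℓ₂) φ(z) exp(z² α₁/α₂)`. -/
def Q (p : Params) (z : ℝ) : ℝ :=
  (p.ℓ₁ / p.ℓ₂) * p.φ z * Real.exp (z^2 * (p.α₁ / p.α₂))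

/-- The function `T` arising from the Robin (convective) boundary condition with
heat-transfer coefficient `h₀` and bulk temperature `Ainf`. -/
def T (p : Params) (h₀ Ainf : ℝ) (z : ℝ) : ℝ :=
  (p.Ste₂ / (Real.sqrt Real.pi * p.c₂)) * ((Ainf - p.B) / (p.B - p.C)) *
    Real.sqrt (p.k₃ * p.c₁ * p.c₃ / p.k₁) *
    (Real.exp (-(z^2) * p.α₁ * (1 / p.α₃ - 1 / p.α₂)) /
      (p.k₃ / (h₀ * Real.sqrt (Real.pi * p.α₃)) + erf (z * Real.sqrt (p.α₁ / p.α₃)))) -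
  z * Real.exp (z^2 * (p.α₁ / p.α₂))

/-- The function `V` arising from the Dirichlet boundary condition with temperature `A`. -/
def V (p : Params) (A : ℝ) (z : ℝ) : ℝ :=
  ((A - p.B) / p.ℓ₂) * Real.sqrt (p.c₁ * p.c₃ * p.k₃ / (Real.pi * p.k₁)) *
    (Real.exp (-(z^2) * (p.α₁ / p.α₃ - p.α₁ / p.α₂)) / erf (z * Real.sqrt (p.α₁ / p.α₃))) -
  z * Real.exp (z^2 * (p.α₁ / p.α₂))

/-- The function `P` arising from the Neumann boundary condition with flux coefficient `q₀`. -/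
def P (p : Params) (q₀ : ℝ) (z : ℝ) : ℝ :=
  Real.exp (z^2 * (p.α₁ / p.α₂)) *
    (-z + (q₀ / p.ℓ₂) * Real.sqrt (p.c₁ / (p.ρ * p.k₁)) * Real.exp (-(z^2) * (p.α₁ / p.α₃)))

/-- Critical heat-transfer coefficient `h₂`. -/
def h2 (p : Params) (Ainf z₀ : ℝ) : ℝ :=
  ((p.B - p.C) / (Ainf - p.B)) *
    Real.sqrt (p.k₂ * p.k₃ * p.c₂ / (Real.pi * p.c₃ * p.α₃)) *
    (1 / erf (z₀ * Real.sqrt (p.α₁ / p.α₂)))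

/-- Critical heat-flux coefficient `q₂`. -/
def q2 (p : Params) (z₀ : ℝ) : ℝ :=
  p.k₂ * (p.B - p.C) / (Real.sqrt (p.α₂ * Real.pi) * erf (z₀ * Real.sqrt (p.α₁ / p.α₂)))

end Params

/-!
On `[0, ∞)` the functions `φ`, `Q` and `H` are strictly increasing: `φ` because
`exp (-z²) / erfc z` is nondecreasing, which is the Gaussian tail bound
`z · erfc z ≤ exp (-z²) / √π`. The right-hand side `P q z` increases in `q` and, when `α₃ < α₂`,
decreases in `z ≥ 0`. Comparing the two equations of the reduced system at `q < q'` then forces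
`λ₁` and `λ₂` to increase, and `A` increases because both its factors `q` and
`erf (λ₂ √(α₁/α₃))` do.
-/

section Erf

open Real Set MeasureTheory

lemma continuous_exp_neg_sq : Continuous fun s : ℝ => exp (-(s ^ 2)) := by fun_prop

lemma integrable_exp_neg_sq : Integrable fun s : ℝ => exp (-(s ^ 2)) := by
  simpa using integrable_exp_neg_mul_sq one_pos

lemma hasDerivAt_erf (x : ℝ) : HasDerivAt erf (2 / √π * exp (-(x ^ 2))) x :=
  (intervalIntegral.integral_hasDerivAt_right (continuous_exp_neg_sq.intervalIntegrable 0 x)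
    (continuous_exp_neg_sq.stronglyMeasurableAtFilter _ _)
    continuous_exp_neg_sq.continuousAt).const_mul _

lemma erf_strictMono : StrictMono erf :=
  strictMono_of_deriv_pos fun x => by rw [(hasDerivAt_erf x).deriv]; positivity

lemma erf_zero : erf 0 = 0 := by simp [erf]

lemma erf_nonneg {x : ℝ} (hx : 0 ≤ x) : 0 ≤ erf x := erf_zero ▸ erf_strictMono.monotone hx

lemma erf_pos {x : ℝ} (hx : 0 < x) : 0 < erf x := erf_zero ▸ erf_strictMono hx

lemma erfc_eq_integral_Ioi (x : ℝ) : erfc x = 2 / √π * ∫ s in Ioi x, exp (-(s ^ 2)) := by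
  have hsplit := intervalIntegral.integral_interval_add_Ioi (a := 0) (b := x)
    integrable_exp_neg_sq.integrableOn integrable_exp_neg_sq.integrableOn
  have htotal : ∫ s in Ioi (0 : ℝ), exp (-(s ^ 2)) = √π / 2 := by
    simpa using integral_gaussian_Ioi 1
  rw [erfc, erf, ← sub_eq_of_eq_add' (hsplit.trans htotal).symm]
  field_simp

lemma erfc_pos (x : ℝ) : 0 < erfc x := by
  have hsplit := intervalIntegral.integral_interval_add_Ioi (a := x) (b := x + 1)
    integrable_exp_neg_sq.integrableOn integrable_exp_neg_sq.integrableOn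
  have hnear : 0 < ∫ s in x..x + 1, exp (-(s ^ 2)) :=
    intervalIntegral.intervalIntegral_pos_of_pos (continuous_exp_neg_sq.intervalIntegrable _ _)
      (fun s => exp_pos _) (lt_add_one x)
  have hfar : 0 ≤ ∫ s in Ioi (x + 1), exp (-(s ^ 2)) :=
    setIntegral_nonneg measurableSet_Ioi fun s _ => (exp_pos _).le
  rw [erfc_eq_integral_Ioi, ← hsplit]
  positivity

lemma integral_Ioi_mul_exp_neg_sq (x : ℝ) :
    ∫ s in Ioi x, s * exp (-(s ^ 2)) = exp (-(x ^ 2)) / 2 := by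
  have hderiv : ∀ s ∈ Ici x, HasDerivAt (fun s : ℝ => -exp (-(s ^ 2)) / 2) (s * exp (-(s ^ 2))) s :=
    fun s _ => ((hasDerivAt_pow 2 s).fun_neg.exp.fun_neg.div_const 2).congr_deriv (by
      push_cast; ring)
  have hlim : Filter.Tendsto (fun s : ℝ => -exp (-(s ^ 2)) / 2) Filter.atTop (nhds 0) := by
    simpa using ((tendsto_exp_atBot.comp
      (Filter.tendsto_neg_atTop_atBot.comp (Filter.tendsto_pow_atTop two_ne_zero))).neg.div_const 2)
  have hint : IntegrableOn (fun s : ℝ => s * exp (-(s ^ 2))) (Ioi x) := by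
    simpa using (integrable_mul_exp_neg_mul_sq one_pos).integrableOn
  rw [integral_Ioi_of_hasDerivAt_of_tendsto' hderiv hint hlim]
  ring

/-- The Gaussian tail bound `erfc x ≤ exp (-x²) / (√π x)`, written so that it holds for all `x`. -/
lemma mul_erfc_le (x : ℝ) : x * erfc x ≤ exp (-(x ^ 2)) / √π := by
  have htail : ∫ s in Ioi x, x * exp (-(s ^ 2)) ≤ ∫ s in Ioi x, s * exp (-(s ^ 2)) :=
    setIntegral_mono_on (integrable_exp_neg_sq.integrableOn.const_mul x)
      (by simpa using (integrable_mul_exp_neg_mul_sq one_pos).integrableOn) measurableSet_Ioi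
      fun s hs => mul_le_mul_of_nonneg_right (le_of_lt hs) (exp_pos _).le
  rw [integral_const_mul, integral_Ioi_mul_exp_neg_sq] at htail
  calc x * erfc x = 2 / √π * (x * ∫ s in Ioi x, exp (-(s ^ 2))) := by
        rw [erfc_eq_integral_Ioi]; ring
    _ ≤ 2 / √π * (exp (-(x ^ 2)) / 2) := by gcongr
    _ = exp (-(x ^ 2)) / √π := by ring

lemma monotone_exp_neg_sq_div_erfc : Monotone fun z => exp (-(z ^ 2)) / erfc z := by
  have hderiv (z : ℝ) : HasDerivAt (fun z => exp (-(z ^ 2)) / erfc z)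
      ((-(2 * z) * exp (-(z ^ 2)) * erfc z - exp (-(z ^ 2)) * -(2 / √π * exp (-(z ^ 2))))
        / erfc z ^ 2) z := by
    have hexp : HasDerivAt (fun z : ℝ => exp (-(z ^ 2))) (-(2 * z) * exp (-(z ^ 2))) z := by
      simpa [mul_comm] using (hasDerivAt_pow 2 z).neg.exp
    exact hexp.div ((hasDerivAt_erf z).const_sub 1) (erfc_pos z).ne'
  refine monotone_of_deriv_nonneg (fun z => (hderiv z).differentiableAt) fun z => ?_
  rw [(hderiv z).deriv]
  have hnum : 0 ≤ exp (-(z ^ 2)) / √π - z * erfc z := sub_nonneg.mpr (mul_erfc_le z)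
  have hfactor : -(2 * z) * exp (-(z ^ 2)) * erfc z - exp (-(z ^ 2)) * -(2 / √π * exp (-(z ^ 2)))
      = 2 * exp (-(z ^ 2)) * (exp (-(z ^ 2)) / √π - z * erfc z) := by ring
  rw [hfactor]
  exact div_nonneg (mul_nonneg (by positivity) hnum) (sq_nonneg _)

end Erf

namespace Params

open Real Set

variable (p : Params)

lemma α₁_pos : 0 < p.α₁ := div_pos p.hk₁ (mul_pos p.hρ p.hc₁)

lemma α₂_pos : 0 < p.α₂ := div_pos p.hk₂ (mul_pos p.hρ p.hc₂)

lemma α₃_pos : 0 < p.α₃ := div_pos p.hk₃ (mul_pos p.hρ p.hc₃)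

lemma Ste₁_pos : 0 < p.Ste₁ := div_pos (mul_pos p.hc₁ (sub_pos.mpr p.hCD)) p.hℓ₁

lemma Ste₂_pos : 0 < p.Ste₂ := div_pos (mul_pos p.hc₂ (sub_pos.mpr p.hBC)) p.hℓ₂

lemma φ_strictMono : StrictMono p.φ := by
  intro x y hxy
  have hratio := monotone_exp_neg_sq_div_erfc hxy.le
  have hc : 0 ≤ p.Ste₁ / √π := (div_pos p.Ste₁_pos (by positivity)).le
  simp only [φ, mul_div_assoc]
  exact add_lt_add_of_lt_of_le hxy (mul_le_mul_of_nonneg_left hratio hc)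

lemma φ_pos {z : ℝ} (hz : 0 ≤ z) : 0 < p.φ z := by
  have := p.Ste₁_pos
  have := erfc_pos z
  unfold φ
  positivity

lemma Q_strictMonoOn : StrictMonoOn p.Q (Ici 0) := by
  intro x hx y hy hxy
  have := p.α₁_pos
  have := p.α₂_pos
  have hexp : exp (x ^ 2 * (p.α₁ / p.α₂)) ≤ exp (y ^ 2 * (p.α₁ / p.α₂)) := by
    simp only [mem_Ici] at hx
    gcongr
  unfold Q
  rw [mul_assoc, mul_assoc]
  exact mul_lt_mul_of_pos_left (mul_lt_mul (p.φ_strictMono hxy) hexp (exp_pos _) (p.φ_pos hy).le)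
    (div_pos p.hℓ₁ p.hℓ₂)

lemma H_strictMonoOn : StrictMonoOn p.H (Ici 0) := by
  intro x hx y hy hxy
  simp only [mem_Ici] at hx hy
  have := p.α₁_pos
  have := p.α₂_pos
  have := p.Ste₂_pos
  have := p.hℓ₁
  have := p.hℓ₂
  have herf : erf (x * √(p.α₁ / p.α₂)) < erf (y * √(p.α₁ / p.α₂)) :=
    erf_strictMono (by gcongr)
  have hdecay : exp (-(y ^ 2) * (p.α₁ / p.α₂)) / p.φ y ≤ exp (-(x ^ 2) * (p.α₁ / p.α₂)) / p.φ x :=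
    div_le_div₀ (exp_pos _).le (by gcongr) (p.φ_pos hx) (p.φ_strictMono hxy).le
  have hK : 0 ≤ p.Ste₂ / √π * (p.ℓ₂ / p.ℓ₁) * √(p.k₂ * p.c₁ / (p.k₁ * p.c₂)) := by positivity
  unfold H
  linarith [mul_le_mul_of_nonneg_left hdecay hK]

lemma P_lt_P_of_lt {q q' : ℝ} (hqq' : q < q') (z : ℝ) : p.P q z < p.P q' z := by
  have := p.hc₁
  have := p.hρ
  have := p.hk₁
  have := p.hℓ₂
  unfold P
  gcongr

lemma P_eq_sub (q z : ℝ) :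
    p.P q z = q / p.ℓ₂ * √(p.c₁ / (p.ρ * p.k₁)) * exp (-(z ^ 2) * (p.α₁ / p.α₃ - p.α₁ / p.α₂))
      - z * exp (z ^ 2 * (p.α₁ / p.α₂)) := by
  have hexp : exp (z ^ 2 * (p.α₁ / p.α₂)) * exp (-(z ^ 2) * (p.α₁ / p.α₃))
      = exp (-(z ^ 2) * (p.α₁ / p.α₃ - p.α₁ / p.α₂)) := by
    rw [← exp_add]; ring_nf
  unfold P
  linear_combination (q / p.ℓ₂ * √(p.c₁ / (p.ρ * p.k₁))) * hexp

/-- The flux term of `P_eq_sub` decays in `z` because its rate `α₁/α₃ - α₁/α₂` is positive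
when `α₃ < α₂`. -/
lemma P_strictAntiOn (hα : p.α₃ < p.α₂) {q : ℝ} (hq : 0 < q) : StrictAntiOn (p.P q) (Ici 0) := by
  intro x hx y hy hxy
  simp only [mem_Ici] at hx hy
  have hα₁ := p.α₁_pos
  have := p.α₂_pos
  have := p.hℓ₂
  have hrate : 0 ≤ p.α₁ / p.α₃ - p.α₁ / p.α₂ :=
    sub_nonneg.mpr (div_le_div_of_nonneg_left hα₁.le p.α₃_pos hα.le)
  have hgrowth : x * exp (x ^ 2 * (p.α₁ / p.α₂)) < y * exp (y ^ 2 * (p.α₁ / p.α₂)) :=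
    mul_lt_mul hxy (by gcongr) (exp_pos _) hy
  have hdecay : exp (-(y ^ 2) * (p.α₁ / p.α₃ - p.α₁ / p.α₂))
      ≤ exp (-(x ^ 2) * (p.α₁ / p.α₃ - p.α₁ / p.α₂)) := by gcongr
  have hK : 0 ≤ q / p.ℓ₂ * √(p.c₁ / (p.ρ * p.k₁)) := by positivity
  rw [P_eq_sub, P_eq_sub]
  linarith [mul_le_mul_of_nonneg_left hdecay hK]

lemma q2_pos {z₀ : ℝ} (hz₀ : 0 < z₀) : 0 < p.q2 z₀ := by
  have := p.α₂_pos
  have := p.hk₂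
  have := sub_pos.mpr p.hBC
  have := erf_pos (mul_pos hz₀ (sqrt_pos.mpr (div_pos p.α₁_pos p.α₂_pos)))
  unfold q2
  positivity

/-- If `x'` did not exceed `x`, monotonicity of `H` and `erf` would give `y' ≤ y`, and then
`Q x' = P q' y' ≥ P q' y > P q y = Q x` would contradict monotonicity of `Q`. -/
lemma lt_and_lt_of_reducedSystem (hα : p.α₃ < p.α₂) {q q' x x' y y' : ℝ} (hq' : 0 < q')
    (hqq' : q < q') (hx : 0 ≤ x) (hx' : 0 ≤ x') (hy : 0 ≤ y) (hy' : 0 ≤ y')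
    (hH : erf (y * √(p.α₁ / p.α₂)) = p.H x) (hQ : p.Q x = p.P q y)
    (hH' : erf (y' * √(p.α₁ / p.α₂)) = p.H x') (hQ' : p.Q x' = p.P q' y') :
    x < x' ∧ y < y' := by
  have hr : 0 < √(p.α₁ / p.α₂) := sqrt_pos.mpr (div_pos p.α₁_pos p.α₂_pos)
  have hxx' : x < x' := by
    by_contra! hle
    have hyy' : y' ≤ y := by
      have := p.H_strictMonoOn.monotoneOn hx' hx hle
      rw [← hH, ← hH', erf_strictMono.le_iff_le] at this
      exact le_of_mul_le_mul_right this hr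
    have hPP : p.P q' y ≤ p.P q' y' := (p.P_strictAntiOn hα hq').antitoneOn hy' hy hyy'
    have hQQ := p.Q_strictMonoOn.monotoneOn hx' hx hle
    linarith [p.P_lt_P_of_lt hqq' y]
  refine ⟨hxx', ?_⟩
  have := p.H_strictMonoOn hx hx' hxx'
  rw [← hH, ← hH', erf_strictMono.lt_iff_lt] at this
  exact lt_of_mul_lt_mul_right this hr.le

end Params

/-- Monotonicity in the heat-flux coefficient. -/
theorem neumann_monotone_in_q (p : Params) (z₀ : ℝ) (lam₁ lam₂ : ℝ → ℝ)
    (hα : p.α₃ < p.α₂)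
    (hz₀ : 0 < z₀ ∧ p.H z₀ = 0)
    (hsol : ∀ q : ℝ, p.q2 z₀ < q →
      z₀ < lam₁ q ∧ 0 ≤ lam₂ q ∧
      erf (lam₂ q * Real.sqrt (p.α₁ / p.α₂)) = p.H (lam₁ q) ∧
      p.Q (lam₁ q) = p.P q (lam₂ q)) :
    ∀ q q' : ℝ, p.q2 z₀ < q → q < q' →
      lam₁ q < lam₁ q' ∧ lam₂ q < lam₂ q' ∧
      p.B + (q * Real.sqrt (Real.pi * p.α₃) / p.k₃) *
          erf (lam₂ q * Real.sqrt (p.α₁ / p.α₃)) <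
      p.B + (q' * Real.sqrt (Real.pi * p.α₃) / p.k₃) *
          erf (lam₂ q' * Real.sqrt (p.α₁ / p.α₃)) := by
  intro q q' hq hqq'
  obtain ⟨hz₀, -⟩ := hz₀
  have hq₀ : 0 < q := (p.q2_pos hz₀).trans hq
  obtain ⟨hx, hy, hH, hQ⟩ := hsol q hq
  obtain ⟨hx', hy', hH', hQ'⟩ := hsol q' (hq.trans hqq')
  obtain ⟨hlam₁, hlam₂⟩ := p.lt_and_lt_of_reducedSystem hα (hq₀.trans hqq') hqq' (hz₀.trans hx).le
    (hz₀.trans hx').le hy hy' hH hQ hH' hQ'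
  refine ⟨hlam₁, hlam₂, add_lt_add_right ?_ _⟩
  have := p.hk₃
  have := p.α₁_pos
  have := p.α₃_pos
  exact mul_lt_mul'' (by gcongr) (erf_strictMono (by gcongr)) (by positivity)
    (erf_nonneg (by positivity))
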